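/- arXiv:2110.00954 — 3 statements merged into one kernel-verified Lean document; each statement's English description precedes it below -/
import Mathlib

section
/- Let U ⊆ ℝ^{n_u} be a nonempty closed convex set, let F : ℝ^{n_u} → ℝ^{n_u} be η-strongly monotone and L-Lipschitz continuous with 0 < η ≤ L, let 0 < α < 2η/L², and set ε := √(1 − 2ηα + L²α²). Let H, Ĥ be real n_y × n_u matrices, let g ∈ ℝ^{n_y} with ‖g‖ ≤ L_h, let ω ∈ ℝ^{n_u}, let u ∈ ℝ^{n_u}, and let u* ∈ U satisfy Π_U(u* − α F(u*)) = u*. Define the updated input u⁺ := Π_U(u − α (F(u) + (Ĥ − H)ᵀ g) + ω). Then ‖u⁺ − u*‖ ≤ ε ‖u − u*‖ + ‖ω‖ + α L_h ‖Ĥ − H‖_F, where ‖·‖_F is the Frobenius norm. -/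
set_option maxHeartbeats 2000000


open Matrix

/-- The Frobenius norm `‖A‖_F = √(Σᵢⱼ Aᵢⱼ²)` of a real matrix. -/
noncomputable def frobeniusNorm' {m n : ℕ} (A : Matrix (Fin m) (Fin n) ℝ) : ℝ :=
  Real.sqrt (∑ i, ∑ j, (A i j) ^ 2)

/-- One-step tracking bound for an Online Feedback Optimization (projected gradient)
update that uses an estimated sensitivity `Ĥ` in place of the true sensitivity `H`:
if `u⁺ = Π_U(u − α(F(u) + (Ĥ − H)ᵀ g) + ω)` and `u*` is a fixed point of the
unperturbed projected gradient map with the true sensitivity, then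
`‖u⁺ − u*‖ ≤ ε‖u − u*‖ + ‖ω‖ + α L_h ‖Ĥ − H‖_F`. -/
theorem ofo_one_step_tracking_bound
    (nu ny : ℕ)
    (U : Set (EuclideanSpace ℝ (Fin nu)))
    (hUne : U.Nonempty) (hUcl : IsClosed U) (hUconv : Convex ℝ U)
    (proj : EuclideanSpace ℝ (Fin nu) → EuclideanSpace ℝ (Fin nu))
    (hproj_mem : ∀ x, proj x ∈ U)
    (hproj_min : ∀ x, ∀ z ∈ U, ‖x - proj x‖ ≤ ‖x - z‖)
    (F : EuclideanSpace ℝ (Fin nu) → EuclideanSpace ℝ (Fin nu))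
    (η L α : ℝ) (hη : 0 < η) (hηL : η ≤ L)
    (hα0 : 0 < α) (hα : α < 2 * η / L ^ 2)
    (hmono : ∀ x y : EuclideanSpace ℝ (Fin nu),
      η * ‖x - y‖ ^ 2 ≤ (inner ℝ (x - y) (F x - F y) : ℝ))
    (hlip : ∀ x y : EuclideanSpace ℝ (Fin nu),
      ‖F x - F y‖ ≤ L * ‖x - y‖)
    (H Hhat : Matrix (Fin ny) (Fin nu) ℝ)
    (g : EuclideanSpace ℝ (Fin ny)) (Lh : ℝ) (hg : ‖g‖ ≤ Lh)
    (ω u ustar : EuclideanSpace ℝ (Fin nu))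
    (hmem : ustar ∈ U)
    (hfix : proj (ustar - α • F ustar) = ustar) :
    ‖proj (u - α • (F u + Matrix.toEuclideanLin ((Hhat - H)ᵀ) g) + ω) - ustar‖
      ≤ Real.sqrt (1 - 2 * η * α + L ^ 2 * α ^ 2) * ‖u - ustar‖
        + ‖ω‖ + α * Lh * frobeniusNorm' (Hhat - H) := by
  set M := Hhat - H with hM
  set d : EuclideanSpace ℝ (Fin nu) := Matrix.toEuclideanLin Mᵀ g with hd
  -- variational inequality for the projection
  have hVI : ∀ x, ∀ w ∈ U, (inner ℝ (x - proj x) (w - proj x) : ℝ) ≤ 0 := by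
    intro x w hw
    haveI : Nonempty ↑U := hUne.to_subtype
    have hmin : ‖x - proj x‖ = ⨅ w : U, ‖x - w‖ := by
      apply le_antisymm
      · exact le_ciInf fun z => hproj_min x z z.2
      · have hbdd : BddBelow (Set.range fun w : U => ‖x - ↑w‖) := by
          refine ⟨0, ?_⟩
          rintro _ ⟨z, rfl⟩
          exact norm_nonneg _
        exact ciInf_le hbdd ⟨proj x, hproj_mem x⟩
    exact (norm_eq_iInf_iff_real_inner_le_zero hUconv (hproj_mem x)).mp hmin w hw
  -- nonexpansiveness of the projection
  have hne : ∀ x y, ‖proj x - proj y‖ ≤ ‖x - y‖ := by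
    intro x y
    have e1 := hVI x (proj y) (hproj_mem y)
    have e2 := hVI y (proj x) (hproj_mem x)
    have h1 : (inner ℝ (x - proj x) (proj x - proj y) : ℝ)
        = - inner ℝ (x - proj x) (proj y - proj x) := by
      rw [← inner_neg_right]; congr 1; abel
    have h2 : (inner ℝ ((x - proj x) - (y - proj y)) (proj x - proj y) : ℝ)
        = inner ℝ (x - proj x) (proj x - proj y) - inner ℝ (y - proj y) (proj x - proj y) :=
      inner_sub_left _ _ _
    have h3 : (x - proj x) - (y - proj y) = (x - y) - (proj x - proj y) := by abel
    have h4 : (inner ℝ ((x - y) - (proj x - proj y)) (proj x - proj y) : ℝ)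
        = inner ℝ (x - y) (proj x - proj y) - ‖proj x - proj y‖ ^ 2 := by
      rw [inner_sub_left, real_inner_self_eq_norm_sq]
    rw [h3, h4, h1] at h2
    have key : ‖proj x - proj y‖ ^ 2 ≤ (inner ℝ (x - y) (proj x - proj y) : ℝ) := by
      linarith
    have hcs := real_inner_le_norm (x - y) (proj x - proj y)
    nlinarith [norm_nonneg (proj x - proj y), norm_nonneg (x - y)]
  -- nonnegativity of the contraction factor
  have hη2L2 : η ^ 2 ≤ L ^ 2 := by nlinarith
  have hε2 : (0:ℝ) ≤ 1 - 2 * η * α + L ^ 2 * α ^ 2 := by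
    nlinarith [sq_nonneg (1 - η * α), sq_nonneg α]
  -- contraction estimate
  have hcontr : ‖(u - α • F u) - (ustar - α • F ustar)‖
      ≤ Real.sqrt (1 - 2 * η * α + L ^ 2 * α ^ 2) * ‖u - ustar‖ := by
    have hv : (u - α • F u) - (ustar - α • F ustar)
        = (u - ustar) - α • (F u - F ustar) := by
      rw [smul_sub]; abel
    rw [hv]
    have hexp : ‖(u - ustar) - α • (F u - F ustar)‖ ^ 2
        = ‖u - ustar‖ ^ 2 - 2 * α * (inner ℝ (u - ustar) (F u - F ustar) : ℝ)
          + α ^ 2 * ‖F u - F ustar‖ ^ 2 := by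
      rw [norm_sub_sq_real, real_inner_smul_right, norm_smul, Real.norm_eq_abs,
        mul_pow, sq_abs]
      ring
    have hm := hmono u ustar
    have hl := hlip u ustar
    have hl2 : ‖F u - F ustar‖ ^ 2 ≤ L ^ 2 * ‖u - ustar‖ ^ 2 := by
      nlinarith [norm_nonneg (F u - F ustar), norm_nonneg (u - ustar), hη.trans_le hηL]
    have hsq : ‖(u - ustar) - α • (F u - F ustar)‖ ^ 2
        ≤ (1 - 2 * η * α + L ^ 2 * α ^ 2) * ‖u - ustar‖ ^ 2 := by
      rw [hexp]
      nlinarith [sq_nonneg α, mul_le_mul_of_nonneg_left hm (by positivity : (0:ℝ) ≤ 2 * α),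
        mul_le_mul_of_nonneg_left hl2 (sq_nonneg α)]
    calc ‖(u - ustar) - α • (F u - F ustar)‖
        = Real.sqrt (‖(u - ustar) - α • (F u - F ustar)‖ ^ 2) :=
          (Real.sqrt_sq (norm_nonneg _)).symm
      _ ≤ Real.sqrt ((1 - 2 * η * α + L ^ 2 * α ^ 2) * ‖u - ustar‖ ^ 2) :=
          Real.sqrt_le_sqrt hsq
      _ = Real.sqrt (1 - 2 * η * α + L ^ 2 * α ^ 2) * ‖u - ustar‖ := by
          rw [Real.sqrt_mul hε2, Real.sqrt_sq (norm_nonneg _)]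
  -- Frobenius bound on the sensitivity-error term
  have hcoord : ∀ j, d j = ∑ i, M i j * g i := by
    intro j
    simp [hd, Matrix.toEuclideanLin_apply, Matrix.mulVec, dotProduct,
      Matrix.transpose_apply, mul_comm]
  have hdnorm : ‖d‖ = Real.sqrt (∑ j, (∑ i, M i j * g i) ^ 2) := by
    rw [EuclideanSpace.norm_eq]
    congr 1
    refine Finset.sum_congr rfl fun j _ => ?_
    rw [hcoord j, Real.norm_eq_abs, sq_abs]
  have hgnorm : ‖g‖ = Real.sqrt (∑ i, (g i) ^ 2) := by
    rw [EuclideanSpace.norm_eq]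
    congr 1
    refine Finset.sum_congr rfl fun i _ => ?_
    rw [Real.norm_eq_abs, sq_abs]
  have hle : ∑ j, (∑ i, M i j * g i) ^ 2
      ≤ (∑ i, ∑ j, (M i j) ^ 2) * (∑ i, (g i) ^ 2) := by
    have hswap : (∑ i, ∑ j, (M i j) ^ 2) = ∑ j, ∑ i, (M i j) ^ 2 :=
      Finset.sum_comm ..
    rw [hswap]
    calc ∑ j, (∑ i, M i j * g i) ^ 2
        ≤ ∑ j, (∑ i, (M i j) ^ 2) * (∑ i, (g i) ^ 2) :=
          Finset.sum_le_sum fun j _ => Finset.sum_mul_sq_le_sq_mul_sq _ _ _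
      _ = (∑ j, ∑ i, (M i j) ^ 2) * (∑ i, (g i) ^ 2) := by rw [Finset.sum_mul]
  have hdle : ‖d‖ ≤ frobeniusNorm' M * ‖g‖ := by
    rw [hdnorm, hgnorm, frobeniusNorm', ← Real.sqrt_mul (by positivity)]
    exact Real.sqrt_le_sqrt hle
  have hfrob : 0 ≤ frobeniusNorm' M := Real.sqrt_nonneg _
  clear_value d M
  -- combine
  have htri : ‖(u - α • (F u + d) + ω) - (ustar - α • F ustar)‖
      ≤ ‖(u - α • F u) - (ustar - α • F ustar)‖ + ‖ω‖ + α * ‖d‖ := by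
    have hsplit : (u - α • (F u + d) + ω) - (ustar - α • F ustar)
        = ((u - α • F u) - (ustar - α • F ustar)) + ω + (-(α • d)) := by
      rw [smul_add]; abel
    rw [hsplit]
    calc ‖((u - α • F u) - (ustar - α • F ustar)) + ω + (-(α • d))‖
        ≤ ‖((u - α • F u) - (ustar - α • F ustar)) + ω‖ + ‖-(α • d)‖ := norm_add_le _ _
      _ ≤ ‖(u - α • F u) - (ustar - α • F ustar)‖ + ‖ω‖ + ‖-(α • d)‖ := by
          have := norm_add_le ((u - α • F u) - (ustar - α • F ustar)) ω
          linarith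
      _ = ‖(u - α • F u) - (ustar - α • F ustar)‖ + ‖ω‖ + α * ‖d‖ := by
          rw [norm_neg, norm_smul, Real.norm_eq_abs, abs_of_pos hα0]
  have hdfin : α * ‖d‖ ≤ α * Lh * frobeniusNorm' M := by
    have h1 : ‖d‖ ≤ Lh * frobeniusNorm' M := by
      calc ‖d‖ ≤ frobeniusNorm' M * ‖g‖ := hdle
        _ ≤ frobeniusNorm' M * Lh := mul_le_mul_of_nonneg_left hg hfrob
        _ = Lh * frobeniusNorm' M := mul_comm _ _
    calc α * ‖d‖ ≤ α * (Lh * frobeniusNorm' M) := mul_le_mul_of_nonneg_left h1 hα0.le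
      _ = α * Lh * frobeniusNorm' M := by ring
  calc ‖proj (u - α • (F u + d) + ω) - ustar‖
      = ‖proj (u - α • (F u + d) + ω) - proj (ustar - α • F ustar)‖ := by rw [hfix]
    _ ≤ ‖(u - α • (F u + d) + ω) - (ustar - α • F ustar)‖ := hne _ _
    _ ≤ ‖(u - α • F u) - (ustar - α • F ustar)‖ + ‖ω‖ + α * ‖d‖ := htri
    _ ≤ Real.sqrt (1 - 2 * η * α + L ^ 2 * α ^ 2) * ‖u - ustar‖ + ‖ω‖
        + α * Lh * frobeniusNorm' M := by linarith
end

section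
/- Let 0 < η ≤ L, 0 < α < 2η/L², ε := √(1 − 2ηα + L²α²), and let σ, s, L_h, C₃, C₄ ≥ 0 and ρ ∈ [0, 1). For each t ≥ 0 let U_t ⊆ ℝ^{n_u} be a nonempty closed convex set, let F_t : ℝ^{n_u} → ℝ^{n_u} be η-strongly monotone and L-Lipschitz continuous, let H_t, Ĥ_t be n_y × n_u real matrices with ‖Ĥ_t − H_t‖_F ≤ √C₃ + √C₄ ρᵗ, let g_t ∈ ℝ^{n_y} with ‖g_t‖ ≤ L_h, let ω_t ∈ ℝ^{n_u} with ‖ω_t‖ ≤ σ, and let u*_t ∈ U_t satisfy Π_{U_t}(u*_t − α F_t(u*_t)) = u*_t and ‖u*_{t+1} − u*_t‖ ≤ s. Define the sequence (u_t) by an arbitrary u_0 ∈ ℝ^{n_u} and u_{t+1} := Π_{U_t}(u_t − α (F_t(u_t) + (Ĥ_t − H_t)ᵀ g_t) + ω_t). Then for all t ≥ 1, ‖u_t − u*_t‖ ≤ εᵗ ‖u_0 − u*_0‖ + (σ + s + √C₃ · α L_h)/(1 − ε) + α L_h · t · √C₄ · (max(ε, ρ))^{t−1}; in particular limsup_{t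 → ∞} ‖u_t − u*_t‖ ≤ (σ + s + √C₃ · α L_h)/(1 − ε). -/
open Matrix Filter

lemma frobeniusNorm'_nonneg {m n : ℕ} (A : Matrix (Fin m) (Fin n) ℝ) :
    0 ≤ frobeniusNorm' A := Real.sqrt_nonneg _

lemma frobeniusNorm'_transpose {m n : ℕ} (A : Matrix (Fin m) (Fin n) ℝ) :
    frobeniusNorm' Aᵀ = frobeniusNorm' A := by
  unfold frobeniusNorm'
  rw [Finset.sum_comm]
  rfl

lemma toEuclideanLin_norm_le {p q : ℕ} (B : Matrix (Fin p) (Fin q) ℝ)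
    (x : EuclideanSpace ℝ (Fin q)) :
    ‖Matrix.toEuclideanLin B x‖ ≤ frobeniusNorm' B * ‖x‖ := by
  have happ : ∀ i, (Matrix.toEuclideanLin B x) i = ∑ j, B i j * x j := by
    intro i
    simp [Matrix.toEuclideanLin_apply, Matrix.mulVec, dotProduct]
  have hx : ‖x‖ = Real.sqrt (∑ j, (x j) ^ 2) := by
    rw [EuclideanSpace.norm_eq]
    congr 1
    refine Finset.sum_congr rfl fun j _ => ?_
    rw [Real.norm_eq_abs, sq_abs]
  have hBx : ‖Matrix.toEuclideanLin B x‖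
      = Real.sqrt (∑ i, ((Matrix.toEuclideanLin B x) i) ^ 2) := by
    rw [EuclideanSpace.norm_eq]
    congr 1
    refine Finset.sum_congr rfl fun i _ => ?_
    rw [Real.norm_eq_abs, sq_abs]
  have key : ∑ i, ((Matrix.toEuclideanLin B x) i) ^ 2
      ≤ (∑ i, ∑ j, (B i j) ^ 2) * (∑ j, (x j) ^ 2) := by
    rw [Finset.sum_mul]
    refine Finset.sum_le_sum fun i _ => ?_
    rw [happ]
    exact Finset.sum_mul_sq_le_sq_mul_sq _ _ _
  calc ‖Matrix.toEuclideanLin B x‖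
      = Real.sqrt (∑ i, ((Matrix.toEuclideanLin B x) i) ^ 2) := hBx
    _ ≤ Real.sqrt ((∑ i, ∑ j, (B i j) ^ 2) * (∑ j, (x j) ^ 2)) := Real.sqrt_le_sqrt key
    _ = frobeniusNorm' B * ‖x‖ := by
        rw [Real.sqrt_mul (by positivity), hx]; rfl

lemma proj_char {n : ℕ} {K : Set (EuclideanSpace ℝ (Fin n))} (hconv : Convex ℝ K)
    (P : EuclideanSpace ℝ (Fin n) → EuclideanSpace ℝ (Fin n))
    (hmem : ∀ x, P x ∈ K) (hmin : ∀ x, ∀ z ∈ K, ‖x - P x‖ ≤ ‖x - z‖)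
    (x : EuclideanSpace ℝ (Fin n)) :
    ∀ w ∈ K, (inner ℝ (x - P x) (w - P x) : ℝ) ≤ 0 := by
  have hbdd : BddBelow (Set.range fun w : K => ‖x - (w : EuclideanSpace ℝ (Fin n))‖) := by
    refine ⟨0, ?_⟩
    rintro b ⟨w, rfl⟩
    exact norm_nonneg _
  haveI : Nonempty K := ⟨⟨P x, hmem x⟩⟩
  have h1 : ‖x - P x‖ ≤ ⨅ w : K, ‖x - (w : EuclideanSpace ℝ (Fin n))‖ :=
    le_ciInf fun w => hmin x w.1 w.2
  have h2 : (⨅ w : K, ‖x - (w : EuclideanSpace ℝ (Fin n))‖) ≤ ‖x - P x‖ :=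
    ciInf_le hbdd ⟨P x, hmem x⟩
  exact (norm_eq_iInf_iff_real_inner_le_zero hconv (hmem x)).mp (le_antisymm h1 h2)

lemma proj_nonexpansive {n : ℕ} {K : Set (EuclideanSpace ℝ (Fin n))} (hconv : Convex ℝ K)
    (P : EuclideanSpace ℝ (Fin n) → EuclideanSpace ℝ (Fin n))
    (hmem : ∀ x, P x ∈ K) (hmin : ∀ x, ∀ z ∈ K, ‖x - P x‖ ≤ ‖x - z‖)
    (x y : EuclideanSpace ℝ (Fin n)) : ‖P x - P y‖ ≤ ‖x - y‖ := by
  have h1 : (inner ℝ (x - P x) (P y - P x) : ℝ) ≤ 0 :=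
    proj_char hconv P hmem hmin x (P y) (hmem y)
  have h2 : (inner ℝ (y - P y) (P x - P y) : ℝ) ≤ 0 :=
    proj_char hconv P hmem hmin y (P x) (hmem x)
  have h1' : (0 : ℝ) ≤ inner ℝ (x - P x) (P x - P y) := by
    rw [← neg_sub (P x) (P y), inner_neg_right] at h1
    linarith
  have expand : (inner ℝ (x - y) (P x - P y) : ℝ)
      = inner ℝ (x - P x) (P x - P y) - inner ℝ (y - P y) (P x - P y)
        + ‖P x - P y‖ ^ 2 := by
    rw [← real_inner_self_eq_norm_sq]
    simp only [inner_sub_left]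
    ring
  have hkey : ‖P x - P y‖ ^ 2 ≤ (inner ℝ (x - y) (P x - P y) : ℝ) := by linarith
  have hcs : (inner ℝ (x - y) (P x - P y) : ℝ) ≤ ‖x - y‖ * ‖P x - P y‖ :=
    real_inner_le_norm _ _
  by_contra h'
  push_neg at h'
  nlinarith [norm_nonneg (P x - P y), norm_nonneg (x - y)]

lemma contraction_step {n : ℕ} (η L α : ℝ) (hη : 0 < η) (hηL : η ≤ L)
    (hα0 : 0 < α)
    (F : EuclideanSpace ℝ (Fin n) → EuclideanSpace ℝ (Fin n))
    (hmono : ∀ x y : EuclideanSpace ℝ (Fin n),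
      η * ‖x - y‖ ^ 2 ≤ (inner ℝ (x - y) (F x - F y) : ℝ))
    (hlip : ∀ x y : EuclideanSpace ℝ (Fin n), ‖F x - F y‖ ≤ L * ‖x - y‖)
    (x y : EuclideanSpace ℝ (Fin n)) :
    ‖(x - α • F x) - (y - α • F y)‖
      ≤ Real.sqrt (1 - 2 * η * α + L ^ 2 * α ^ 2) * ‖x - y‖ := by
  set D := 1 - 2 * η * α + L ^ 2 * α ^ 2 with hDdef
  have hD0 : 0 ≤ D := by nlinarith [sq_nonneg (1 - η * α), sq_nonneg α, mul_le_mul hηL hηL hη.le (hη.le.trans hηL)]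
  have heq : (x - α • F x) - (y - α • F y) = (x - y) - α • (F x - F y) := by
    rw [smul_sub]; abel
  have hsq : ‖(x - y) - α • (F x - F y)‖ ^ 2 ≤ D * ‖x - y‖ ^ 2 := by
    rw [norm_sub_sq_real, real_inner_smul_right, norm_smul, Real.norm_eq_abs,
      abs_of_pos hα0, mul_pow]
    have h1 := hmono x y
    have h2 := hlip x y
    have h2' : ‖F x - F y‖ ^ 2 ≤ (L * ‖x - y‖) ^ 2 := by
      have := norm_nonneg (F x - F y)
      nlinarith
    nlinarith [sq_nonneg α, sq_nonneg ‖x - y‖]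
  rw [heq]
  have := Real.sqrt_le_sqrt hsq
  rwa [Real.sqrt_sq (norm_nonneg _), Real.sqrt_mul hD0, Real.sqrt_sq (norm_nonneg _)] at this

set_option maxHeartbeats 2000000 in
/-- Deterministic (pathwise) tracking bound for the persistently excited Online
Feedback Optimization controller with estimated sensitivity `Ĥ_t`: the produced inputs
`u_t` track the time-varying optimizers `u*_t` up to an error determined by the
excitation magnitude `σ`, the temporal variation `s` of the optimizer, and the
asymptotic sensitivity-estimation error `√C₃`. -/
theorem ofo_tracking_bound
    (nu ny : ℕ)
    (η L α : ℝ) (hη : 0 < η) (hηL : η ≤ L)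
    (hα0 : 0 < α) (hα : α < 2 * η / L ^ 2)
    (σ s Lh C₃ C₄ ρ : ℝ)
    (hσ : 0 ≤ σ) (hs : 0 ≤ s) (hLh : 0 ≤ Lh) (hC₃ : 0 ≤ C₃) (hC₄ : 0 ≤ C₄)
    (hρ0 : 0 ≤ ρ) (hρ1 : ρ < 1)
    (U : ℕ → Set (EuclideanSpace ℝ (Fin nu)))
    (hUne : ∀ t, (U t).Nonempty) (hUcl : ∀ t, IsClosed (U t))
    (hUconv : ∀ t, Convex ℝ (U t))
    (proj : ℕ → EuclideanSpace ℝ (Fin nu) → EuclideanSpace ℝ (Fin nu))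
    (hproj_mem : ∀ t x, proj t x ∈ U t)
    (hproj_min : ∀ t x, ∀ z ∈ U t, ‖x - proj t x‖ ≤ ‖x - z‖)
    (F : ℕ → EuclideanSpace ℝ (Fin nu) → EuclideanSpace ℝ (Fin nu))
    (hmono : ∀ t, ∀ x y : EuclideanSpace ℝ (Fin nu),
      η * ‖x - y‖ ^ 2 ≤ (inner ℝ (x - y) (F t x - F t y) : ℝ))
    (hlip : ∀ t, ∀ x y : EuclideanSpace ℝ (Fin nu),
      ‖F t x - F t y‖ ≤ L * ‖x - y‖)
    (H Hhat : ℕ → Matrix (Fin ny) (Fin nu) ℝ)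
    (hH : ∀ t, frobeniusNorm' (Hhat t - H t) ≤ Real.sqrt C₃ + Real.sqrt C₄ * ρ ^ t)
    (g : ℕ → EuclideanSpace ℝ (Fin ny)) (hg : ∀ t, ‖g t‖ ≤ Lh)
    (ω : ℕ → EuclideanSpace ℝ (Fin nu)) (hω : ∀ t, ‖ω t‖ ≤ σ)
    (ustar : ℕ → EuclideanSpace ℝ (Fin nu))
    (hustar_mem : ∀ t, ustar t ∈ U t)
    (hfix : ∀ t, proj t (ustar t - α • F t (ustar t)) = ustar t)
    (hvar : ∀ t, ‖ustar (t + 1) - ustar t‖ ≤ s)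
    (u : ℕ → EuclideanSpace ℝ (Fin nu))
    (hrec : ∀ t, u (t + 1) =
      proj t (u t - α • (F t (u t) + Matrix.toEuclideanLin ((Hhat t - H t)ᵀ) (g t))
        + ω t)) :
    (∀ t, 1 ≤ t →
      ‖u t - ustar t‖
        ≤ (Real.sqrt (1 - 2 * η * α + L ^ 2 * α ^ 2)) ^ t * ‖u 0 - ustar 0‖
          + (σ + s + Real.sqrt C₃ * (α * Lh))
              / (1 - Real.sqrt (1 - 2 * η * α + L ^ 2 * α ^ 2))
          + α * Lh * t * Real.sqrt C₄ *
              (max (Real.sqrt (1 - 2 * η * α + L ^ 2 * α ^ 2)) ρ) ^ (t - 1)) ∧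
    Filter.limsup (fun t => ‖u t - ustar t‖) Filter.atTop
      ≤ (σ + s + Real.sqrt C₃ * (α * Lh))
          / (1 - Real.sqrt (1 - 2 * η * α + L ^ 2 * α ^ 2)) := by
  have hL0 : 0 < L := lt_of_lt_of_le hη hηL
  set ε := Real.sqrt (1 - 2 * η * α + L ^ 2 * α ^ 2) with hεdef
  have hε0 : 0 ≤ ε := Real.sqrt_nonneg _
  have hε1 : ε < 1 := by
    have hα' : α * L ^ 2 < 2 * η := by
      rw [lt_div_iff₀ (by positivity : (0:ℝ) < L ^ 2)] at hα
      linarith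
    have hlt : 1 - 2 * η * α + L ^ 2 * α ^ 2 < 1 := by nlinarith
    have hD0 : (0:ℝ) ≤ 1 - 2 * η * α + L ^ 2 * α ^ 2 := by
      nlinarith [sq_nonneg (1 - η * α), mul_le_mul hηL hηL hη.le (hη.le.trans hηL), sq_nonneg α]
    rw [hεdef]
    calc Real.sqrt (1 - 2 * η * α + L ^ 2 * α ^ 2) < Real.sqrt 1 :=
          Real.sqrt_lt_sqrt hD0 hlt
      _ = 1 := Real.sqrt_one
  have h1ε : 0 < 1 - ε := by linarith
  set c := σ + s + Real.sqrt C₃ * (α * Lh) with hcdef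
  set d := α * Lh * Real.sqrt C₄ with hddef
  set m := max ε ρ with hmdef
  have hm0 : 0 ≤ m := le_trans hε0 (le_max_left _ _)
  have hm1 : m < 1 := max_lt hε1 hρ1
  have hεm : ε ≤ m := le_max_left _ _
  have hρm : ρ ≤ m := le_max_right _ _
  have hc0 : 0 ≤ c := by positivity
  have hd0 : 0 ≤ d := by positivity
  have hcc : c ≤ c / (1 - ε) := by
    rw [le_div_iff₀ h1ε]
    nlinarith
  -- step bound
  have hstep : ∀ t, ‖u (t + 1) - ustar (t + 1)‖
      ≤ ε * ‖u t - ustar t‖ + (c + d * ρ ^ t) := by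
    intro t
    set e := Matrix.toEuclideanLin ((Hhat t - H t)ᵀ) (g t) with hedef
    have he : ‖e‖ ≤ (Real.sqrt C₃ + Real.sqrt C₄ * ρ ^ t) * Lh := by
      calc ‖e‖ ≤ frobeniusNorm' ((Hhat t - H t)ᵀ) * ‖g t‖ :=
            toEuclideanLin_norm_le _ _
        _ ≤ (Real.sqrt C₃ + Real.sqrt C₄ * ρ ^ t) * Lh := by
            rw [frobeniusNorm'_transpose]
            exact mul_le_mul (hH t) (hg t) (norm_nonneg _)
              (by positivity)
    have htri1 : ‖u (t + 1) - ustar (t + 1)‖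
        ≤ ‖u (t + 1) - ustar t‖ + ‖ustar (t + 1) - ustar t‖ := by
      have : u (t + 1) - ustar (t + 1)
          = (u (t + 1) - ustar t) - (ustar (t + 1) - ustar t) := by abel
      rw [this]
      exact norm_sub_le _ _
    have hne : ‖u (t + 1) - ustar t‖
        ≤ ε * ‖u t - ustar t‖ + α * ‖e‖ + σ := by
      have hproj : ‖u (t + 1) - ustar t‖
          ≤ ‖(u t - α • (F t (u t) + e) + ω t) - (ustar t - α • F t (ustar t))‖ := by
        conv_lhs => rw [hrec t, ← hfix t]
        exact proj_nonexpansive (hUconv t) (proj t) (hproj_mem t) (hproj_min t) _ _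
      have hsplit : (u t - α • (F t (u t) + e) + ω t) - (ustar t - α • F t (ustar t))
          = ((u t - α • F t (u t)) - (ustar t - α • F t (ustar t))) + (-(α • e)) + ω t := by
        rw [smul_add]; abel
      have hcontr := contraction_step η L α hη hηL hα0 (F t) (hmono t) (hlip t)
        (u t) (ustar t)
      rw [hsplit] at hproj
      have htri2 : ‖((u t - α • F t (u t)) - (ustar t - α • F t (ustar t))) + (-(α • e)) + ω t‖
          ≤ ‖(u t - α • F t (u t)) - (ustar t - α • F t (ustar t))‖ + ‖α • e‖ + ‖ω t‖ := by
        have hA := norm_add_le (((u t - α • F t (u t)) - (ustar t - α • F t (ustar t)))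
          + (-(α • e))) (ω t)
        have hB := norm_add_le ((u t - α • F t (u t)) - (ustar t - α • F t (ustar t)))
          (-(α • e))
        rw [norm_neg] at hB
        linarith
      have hn : ‖α • e‖ = α * ‖e‖ := by
        rw [norm_smul, Real.norm_eq_abs, abs_of_pos hα0]
      have hωt := hω t
      rw [hn] at htri2
      have := hproj.trans htri2
      linarith [hcontr]
    have hvar' : ‖ustar (t + 1) - ustar t‖ ≤ s := hvar t
    have hαe : α * ‖e‖ ≤ Real.sqrt C₃ * (α * Lh) + d * ρ ^ t := by
      have := mul_le_mul_of_nonneg_left he hα0.le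
      rw [hddef]
      nlinarith [Real.sqrt_nonneg C₃, Real.sqrt_nonneg C₄, pow_nonneg hρ0 t]
    rw [hcdef]
    linarith
  -- the main inductive bound
  have main : ∀ t, 1 ≤ t → ‖u t - ustar t‖
      ≤ ε ^ t * ‖u 0 - ustar 0‖ + c / (1 - ε) + d * t * m ^ (t - 1) := by
    intro t ht
    induction t, ht using Nat.le_induction with
    | base =>
      have h0 := hstep 0
      simp only [pow_zero, mul_one] at h0
      have : ‖u 1 - ustar 1‖ ≤ ε * ‖u 0 - ustar 0‖ + c + d := by linarith
      simp only [pow_one, Nat.cast_one, mul_one, Nat.sub_self, pow_zero]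
      linarith
    | succ t ht ih =>
      have hstept := hstep t
      have hεnonneg := hε0
      have hεih := mul_le_mul_of_nonneg_left ih hε0
      have hpow : m ^ (t - 1) * m = m ^ t := by
        rw [← pow_succ, Nat.sub_add_cancel ht]
      have hterm1 : ε * (ε ^ t * ‖u 0 - ustar 0‖) = ε ^ (t + 1) * ‖u 0 - ustar 0‖ := by
        ring
      have hterm2 : ε * (c / (1 - ε)) + c = c / (1 - ε) := by
        field_simp
        ring
      have hterm3 : ε * (d * t * m ^ (t - 1)) + d * ρ ^ t
          ≤ d * (t + 1 : ℕ) * m ^ t := by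
        have hρt : ρ ^ t ≤ m ^ t := pow_le_pow_left₀ hρ0 hρm t
        have hεmt : ε * m ^ (t - 1) ≤ m ^ t := by
          calc ε * m ^ (t - 1) ≤ m * m ^ (t - 1) :=
                mul_le_mul_of_nonneg_right hεm (pow_nonneg hm0 _)
            _ = m ^ t := by rw [mul_comm, hpow]
        have ht0 : (0:ℝ) ≤ (t:ℝ) := Nat.cast_nonneg t
        have e1 : ε * (d * (t:ℝ) * m ^ (t - 1)) ≤ d * (t:ℝ) * m ^ t := by
          calc ε * (d * (t:ℝ) * m ^ (t - 1)) = (d * (t:ℝ)) * (ε * m ^ (t - 1)) := by ring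
            _ ≤ (d * (t:ℝ)) * m ^ t :=
                mul_le_mul_of_nonneg_left hεmt (mul_nonneg hd0 ht0)
        have e2 : d * ρ ^ t ≤ d * m ^ t := mul_le_mul_of_nonneg_left hρt hd0
        have e3 : d * ((t + 1 : ℕ) : ℝ) * m ^ t = d * (t:ℝ) * m ^ t + d * m ^ t := by
          push_cast; ring
        linarith
      have hfinal : ‖u (t + 1) - ustar (t + 1)‖
          ≤ ε ^ (t + 1) * ‖u 0 - ustar 0‖ + c / (1 - ε) + d * (t + 1 : ℕ) * m ^ t := by
        calc ‖u (t + 1) - ustar (t + 1)‖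
            ≤ ε * ‖u t - ustar t‖ + (c + d * ρ ^ t) := hstept
          _ ≤ ε * (ε ^ t * ‖u 0 - ustar 0‖ + c / (1 - ε) + d * t * m ^ (t - 1))
                + (c + d * ρ ^ t) := by linarith
          _ = ε ^ (t + 1) * ‖u 0 - ustar 0‖ + (ε * (c / (1 - ε)) + c)
                + (ε * (d * t * m ^ (t - 1)) + d * ρ ^ t) := by ring
          _ ≤ ε ^ (t + 1) * ‖u 0 - ustar 0‖ + c / (1 - ε) + d * (t + 1 : ℕ) * m ^ t := by
              rw [hterm2]; linarith
      simpa using hfinal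
  refine ⟨fun t ht => by
    have := main t ht
    calc ‖u t - ustar t‖ ≤ ε ^ t * ‖u 0 - ustar 0‖ + c / (1 - ε) + d * t * m ^ (t - 1) :=
          this
      _ = ε ^ t * ‖u 0 - ustar 0‖ + c / (1 - ε) + α * Lh * t * Real.sqrt C₄ * m ^ (t - 1) := by
          ring, ?_⟩
  -- limsup part
  set f : ℕ → ℝ := fun t => ε ^ t * ‖u 0 - ustar 0‖ + c / (1 - ε) + d * t * m ^ (t - 1)
    with hfdef
  have hftend : Tendsto f atTop (nhds (0 * ‖u 0 - ustar 0‖ + c / (1 - ε) + d * 0)) := by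
    have h1 : Tendsto (fun t : ℕ => ε ^ t * ‖u 0 - ustar 0‖) atTop
        (nhds (0 * ‖u 0 - ustar 0‖)) :=
      (tendsto_pow_atTop_nhds_zero_of_lt_one hε0 hε1).mul_const _
    have h2 : Tendsto (fun t : ℕ => (t : ℝ) * m ^ (t - 1)) atTop (nhds 0) := by
      have ha : Tendsto (fun t : ℕ => ((t - 1 : ℕ) : ℝ) * m ^ (t - 1)) atTop (nhds 0) :=
        (tendsto_self_mul_const_pow_of_lt_one hm0 hm1).comp (tendsto_sub_atTop_nat 1)
      have hb : Tendsto (fun t : ℕ => m ^ (t - 1)) atTop (nhds 0) :=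
        (tendsto_pow_atTop_nhds_zero_of_lt_one hm0 hm1).comp (tendsto_sub_atTop_nat 1)
      have hc' := ha.add hb
      rw [add_zero] at hc'
      refine hc'.congr' ?_
      filter_upwards [eventually_ge_atTop 1] with t ht
      have hcast : ((t - 1 : ℕ) : ℝ) = (t : ℝ) - 1 := by
        rw [Nat.cast_sub ht, Nat.cast_one]
      rw [hcast]
      ring
    have h3 : Tendsto (fun t : ℕ => d * ((t : ℝ) * m ^ (t - 1))) atTop (nhds (d * 0)) :=
      h2.const_mul d
    have hconst : Tendsto (fun _ : ℕ => c / (1 - ε)) atTop (nhds (c / (1 - ε))) :=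
      tendsto_const_nhds
    have := (h1.add hconst).add h3
    refine this.congr fun t => ?_
    simp only [hfdef]
    ring
  rw [zero_mul, mul_zero, zero_add, add_zero] at hftend
  have hle : (fun t => ‖u t - ustar t‖) ≤ᶠ[atTop] f := by
    filter_upwards [eventually_ge_atTop 1] with t ht
    exact main t ht
  have hcob : IsCoboundedUnder (· ≤ ·) atTop (fun t => ‖u t - ustar t‖) :=
    isCoboundedUnder_le_of_le atTop fun t => norm_nonneg _
  have hbdd : IsBoundedUnder (· ≤ ·) atTop f := hftend.isBoundedUnder_le
  calc Filter.limsup (fun t => ‖u t - ustar t‖) Filter.atTop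
      ≤ Filter.limsup f atTop := limsup_le_limsup hle hcob hbdd
    _ = c / (1 - ε) := hftend.limsup_eq
end

section
/- Let Σ be a real symmetric positive semidefinite n × n matrix, Σ_m a real symmetric positive definite m × m matrix, and U an arbitrary real m × n matrix. Then Σ_m + U Σ Uᵀ is symmetric positive definite (hence invertible), and, with Kalman gain K := Σ Uᵀ (Σ_m + U Σ Uᵀ)^{−1}, the matrix (I − K U) Σ = Σ − Σ Uᵀ (Σ_m + U Σ Uᵀ)^{−1} U Σ is symmetric positive semidefinite. -/
open Matrix

/-- The Kalman gain is well defined and the covariance update preserves positive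
semidefiniteness: for `Σ ⪰ 0` symmetric, `Σ_m ≻ 0` symmetric and any `U`, the matrix
`Σ_m + U Σ Uᵀ` is positive definite (hence invertible), and with
`K = Σ Uᵀ (Σ_m + U Σ Uᵀ)⁻¹`, the matrix `(I − K U) Σ = Σ − Σ Uᵀ (Σ_m + U Σ Uᵀ)⁻¹ U Σ`
is symmetric positive semidefinite. -/
theorem kalman_gain_well_defined_and_covariance_psd
    (n m : ℕ)
    (Sig : Matrix (Fin n) (Fin n) ℝ) (hSig : Sig.PosSemidef)
    (Sigm : Matrix (Fin m) (Fin m) ℝ) (hSigm : Sigm.PosDef)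
    (U : Matrix (Fin m) (Fin n) ℝ) :
    (Sigm + U * Sig * Uᵀ).PosDef ∧ IsUnit (Sigm + U * Sig * Uᵀ) ∧
    ((1 - (Sig * Uᵀ * (Sigm + U * Sig * Uᵀ)⁻¹) * U) * Sig
        = Sig - Sig * Uᵀ * (Sigm + U * Sig * Uᵀ)⁻¹ * U * Sig) ∧
    ((1 - (Sig * Uᵀ * (Sigm + U * Sig * Uᵀ)⁻¹) * U) * Sig).PosSemidef := by
  have hUT : Uᴴ = Uᵀ := Matrix.conjTranspose_eq_transpose_of_trivial U
  have hpsd : (U * Sig * Uᵀ).PosSemidef := by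
    have := hSig.mul_mul_conjTranspose_same U
    rwa [hUT] at this
  have hS : (Sigm + U * Sig * Uᵀ).PosDef := hSigm.add_posSemidef hpsd
  have hSu : IsUnit (Sigm + U * Sig * Uᵀ) := hS.isUnit
  have heq : (1 - (Sig * Uᵀ * (Sigm + U * Sig * Uᵀ)⁻¹) * U) * Sig
      = Sig - Sig * Uᵀ * (Sigm + U * Sig * Uᵀ)⁻¹ * U * Sig := by
    rw [sub_mul, one_mul]
  refine ⟨hS, hSu, heq, ?_⟩
  rw [heq]
  haveI : Invertible (Sigm + U * Sig * Uᵀ) := hSu.invertible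
  -- block matrix argument
  have hSigT : Sigᵀ = Sig := by
    have := hSig.isHermitian
    rwa [Matrix.IsHermitian, Matrix.conjTranspose_eq_transpose_of_trivial] at this
  have hblock : (Matrix.fromBlocks (Sigm + U * Sig * Uᵀ) (U * Sig) (U * Sig)ᴴ Sig).PosSemidef := by
    have h1 : (Matrix.fromRows (1 : Matrix (Fin m) (Fin m) ℝ)
        (0 : Matrix (Fin n) (Fin m) ℝ) * Sigm *
        (Matrix.fromRows (1 : Matrix (Fin m) (Fin m) ℝ) (0 : Matrix (Fin n) (Fin m) ℝ))ᴴ)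
        = Matrix.fromBlocks Sigm 0 0 0 := by
      rw [Matrix.conjTranspose_fromRows_eq_fromCols_conjTranspose,
        Matrix.fromRows_mul, Matrix.fromRows_mul_fromCols]
      simp
    have h2 : (Matrix.fromRows U (1 : Matrix (Fin n) (Fin n) ℝ) * Sig *
        (Matrix.fromRows U (1 : Matrix (Fin n) (Fin n) ℝ))ᴴ)
        = Matrix.fromBlocks (U * Sig * Uᴴ) (U * Sig) (Sig * Uᴴ) Sig := by
      rw [Matrix.conjTranspose_fromRows_eq_fromCols_conjTranspose,
        Matrix.fromRows_mul, Matrix.fromRows_mul_fromCols]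
      simp [Matrix.mul_assoc]
    have hp1 := hSigm.posSemidef.mul_mul_conjTranspose_same
      (Matrix.fromRows (1 : Matrix (Fin m) (Fin m) ℝ) (0 : Matrix (Fin n) (Fin m) ℝ))
    have hp2 := hSig.mul_mul_conjTranspose_same
      (Matrix.fromRows U (1 : Matrix (Fin n) (Fin n) ℝ))
    rw [h1] at hp1
    rw [h2] at hp2
    have := hp1.add hp2
    rw [Matrix.fromBlocks_add] at this
    simp only [zero_add, hUT] at this
    have hct : (U * Sig)ᴴ = Sig * Uᵀ := by
      rw [Matrix.conjTranspose_mul, hUT, Matrix.conjTranspose_eq_transpose_of_trivial, hSigT]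
    rwa [hct]
  rw [Matrix.PosDef.fromBlocks₁₁ (U * Sig) Sig hS] at hblock
  have : (U * Sig)ᴴ = Sig * Uᵀ := by
    rw [Matrix.conjTranspose_mul, hUT, Matrix.conjTranspose_eq_transpose_of_trivial, hSigT]
  rw [this] at hblock
  rw [Matrix.mul_assoc _ U Sig]
  exact hblock
end
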